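/- A bounded configuration ξ ∈ Ω_A^τ is uniquely determined by the pair (κ(ξ), R_ξ(κ(ξ))) consisting of its (finite) stem and the root of its stem. Conversely, every pair (κ, R) with κ a finite positive admissible word and R ⊆ ℕ a set containing the last letter of κ (when κ ≠ e) arises as such a pair for exactly one configuration in Ω_A^τ. -/

import Mathlib

/-!
Walking from `1` along the reduced word of a filled vertex, the rules leave no choice. On the stem,
the vertex `κ_{<k}` has the unique filled positive successor `κ_k` (and `κ` itself has none); once a
letter `m⁻¹` has been read, the only filled positive successor is `m`, leading back. Knowing that
successor `y`, rule (R4) — or the root, at `κ` — says exactly which letters `x⁻¹` may follow. So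
membership in a configuration with stem `κ` and root `R` is decided by a deterministic automaton
reading reduced words, which depends on `A`, `κ`, `R` only: this is uniqueness. Conversely, for an
admissible stem and a root containing its last letter, the accepted vertices form a configuration
of `Ω_A^τ`: they are closed under prefixes, which in the Cayley tree gives the convexity (R2), and
(R3), (R4) are read off the transitions.
-/

/-- The positive element of the free group `𝔽 = F(ℕ)` associated to a finite word. -/
def listToF (l : List ℕ) : FreeGroup ℕ := (l.map FreeGroup.of).prod

/-- The word-metric distance in the Cayley tree of the free group. -/
def fgDist (a b : FreeGroup ℕ) : ℕ := (FreeGroup.toWord (a⁻¹ * b)).length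

/-- The rules (R1)-(R4) defining `Ω_A^τ`. -/
def OmegaTau (A : ℕ → ℕ → Bool) (ξ : FreeGroup ℕ → Bool) : Prop :=
  ξ 1 = true ∧
  (∀ a b c : FreeGroup ℕ, ξ a = true → ξ b = true →
    fgDist a c + fgDist c b = fgDist a b → ξ c = true) ∧
  (∀ g : FreeGroup ℕ, ξ g = true → ∀ y z : ℕ,
    ξ (g * FreeGroup.of y) = true → ξ (g * FreeGroup.of z) = true → y = z) ∧
  (∀ (g : FreeGroup ℕ) (y : ℕ), ξ g = true → ξ (g * FreeGroup.of y) = true →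
    ∀ x : ℕ, (ξ (g * (FreeGroup.of x)⁻¹) = true ↔ A x y = true))

/-- `ξ` has the finite word `κ` as its stem: the filled positive elements of `ξ` are
exactly the prefixes of `κ`. -/
def HasStem (ξ : FreeGroup ℕ → Bool) (κ : List ℕ) : Prop :=
  ∀ l : List ℕ, (ξ (listToF l) = true ↔ l <+: κ)

theorem List.append_singleton_prefix_iff {α : Type*} {l κ : List α} {a : α} :
    l ++ [a] <+: κ ↔ l <+: κ ∧ κ[l.length]? = some a := by
  constructor
  · rintro ⟨t, rfl⟩
    exact ⟨⟨[a] ++ t, by simp⟩, by simp⟩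
  · rintro ⟨⟨t, rfl⟩, h⟩
    cases t with
    | nil => simp at h
    | cons b t =>
      obtain rfl : b = a := by simpa using h
      exact ⟨t, by simp⟩

namespace FreeGroup

variable {α : Type*}

theorem of_eq_mk (a : α) : of a = mk [(a, true)] := rfl

theorem inv_of_eq_mk (a : α) : (of a)⁻¹ = mk [(a, false)] := by
  simp [of, inv_mk, invRev]

variable [DecidableEq α]

theorem toWord_mk_of_isReduced {L : List (α × Bool)} (h : IsReduced L) : (mk L).toWord = L := by
  rw [toWord_mk, h.reduce_eq]

theorem toWord_mul_of_length_eq {x y : FreeGroup α}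
    (h : (x * y).toWord.length = x.toWord.length + y.toWord.length) :
    (x * y).toWord = x.toWord ++ y.toWord :=
  (toWord_mul_sublist x y).eq_of_length (by simpa using h)

theorem mul_mk_singleton_of_toWord_eq {g : FreeGroup α} {w : List (α × Bool)} {a : α} {b : Bool}
    (h : g.toWord = w ++ [(a, !b)]) : g * mk [(a, b)] = mk w := by
  have hg : g = mk w * (mk [(a, b)])⁻¹ := by
    rw [inv_mk, mul_mk, ← mk_toWord (x := g), h]
    simp [invRev]
  rw [hg, inv_mul_cancel_right]

theorem toWord_mul_mk_singleton {g : FreeGroup α} {a : α} {b : Bool}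
    (h : g.toWord.getLast? ≠ some (a, !b)) : (g * mk [(a, b)]).toWord = g.toWord ++ [(a, b)] := by
  have hred : IsReduced (g.toWord ++ [(a, b)]) := by
    refine List.isChain_append.2 ⟨isReduced_toWord, IsReduced.singleton, fun x hx y hy hxy => ?_⟩
    obtain rfl : y = (a, b) := by simpa using hy.symm
    by_contra hne
    have hx' : x = (a, !b) := Prod.ext hxy (Bool.eq_not.2 hne)
    exact h (hx' ▸ hx)
  rw [← toWord_mk_of_isReduced hred, ← mul_mk, mk_toWord]

theorem IsReduced.exists_cancel {L₁ L₂ : List (α × Bool)} (h₁ : IsReduced L₁)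
    (h₂ : IsReduced L₂) :
    ∃ L₁' s L₂', L₁ = L₁' ++ s ∧ L₂ = invRev s ++ L₂' ∧ IsReduced (L₁' ++ L₂') := by
  induction L₂ generalizing L₁ with
  | nil => exact ⟨L₁, [], [], by simp, by simp [invRev], by simpa⟩
  | cons y L₂ ih =>
    rcases L₁.eq_nil_or_concat with rfl | ⟨L₁, x, rfl⟩
    · exact ⟨[], [], y :: L₂, by simp, by simp [invRev], by simpa⟩
    rw [List.concat_eq_append] at h₁ ⊢
    by_cases hxy : x = (y.1, !y.2)
    · obtain ⟨L₁', s, L₂', rfl, rfl, h⟩ :=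
        ih (h₁.infix ⟨[], [x], rfl⟩) (h₂.infix ⟨[y], [], by simp⟩)
      exact ⟨L₁', s ++ [x], L₂', by simp, by simp [invRev, hxy], h⟩
    · refine ⟨L₁ ++ [x], [], y :: L₂, by simp, by simp [invRev], ?_⟩
      refine h₁.append_overlap (L₂ := [x]) ?_ (List.cons_ne_nil _ _)
      refine isReduced_cons_cons.2 ⟨fun h => ?_, h₂⟩
      by_contra hne
      exact hxy (Prod.ext h (Bool.eq_not.2 hne))

theorem toWord_prefix_of_length_add_length {a b c : FreeGroup α}
    (h : (a⁻¹ * c).toWord.length + (c⁻¹ * b).toWord.length = (a⁻¹ * b).toWord.length) :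
    c.toWord <+: a.toWord ∨ c.toWord <+: b.toWord := by
  have hsplit : a⁻¹ * c * (c⁻¹ * b) = a⁻¹ * b := by group
  have huv : IsReduced ((a⁻¹ * c).toWord ++ (c⁻¹ * b).toWord) := by
    rw [← toWord_mul_of_length_eq (by rw [hsplit]; exact h.symm)]
    exact isReduced_toWord
  obtain ⟨a', s, u', ha, hu, hc⟩ :=
    (isReduced_toWord (x := a)).exists_cancel (isReduced_toWord (x := a⁻¹ * c))
  have hc_eq : c = mk (a' ++ u') := by
    calc c = a * (a⁻¹ * c) := by group
      _ = mk a' * (mk s * (mk s)⁻¹) * mk u' := by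
        rw [← mk_toWord (x := a⁻¹ * c), hu, ← mk_toWord (x := a), ha, inv_mk, ← mul_mk, ← mul_mk]
        group
      _ = mk (a' ++ u') := by rw [mul_inv_cancel, mul_one, mul_mk]
  rw [hc_eq, toWord_mk_of_isReduced hc]
  obtain rfl | hne := eq_or_ne u' []
  · exact .inl (by simp [ha])
  · right
    have hb : b = mk (a' ++ u' ++ (c⁻¹ * b).toWord) := by
      rw [← mul_mk, ← hc_eq, mk_toWord]
      group
    have hred : IsReduced (a' ++ u' ++ (c⁻¹ * b).toWord) :=
      hc.append_overlap (huv.infix ⟨invRev s, [], by simp [hu]⟩) hne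
    rw [hb, toWord_mk_of_isReduced hred]
    exact List.prefix_append _ _

end FreeGroup

open FreeGroup

theorem listToF_eq_mk (l : List ℕ) : listToF l = mk (l.map (·, true)) := by
  induction l with
  | nil => rfl
  | cons a l ih =>
    rw [List.map_cons, ← List.singleton_append (l := List.map _ l), ← mul_mk, ← ih]
    simp [listToF, of]

theorem toWord_listToF (l : List ℕ) : (listToF l).toWord = l.map (·, true) := by
  rw [listToF_eq_mk, toWord_mk_of_isReduced]
  simp [FreeGroup.IsReduced, List.isChain_iff_getElem]

theorem listToF_concat (l : List ℕ) (a : ℕ) : listToF (l ++ [a]) = listToF l * of a := by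
  simp [listToF]

def PrefixClosed (ξ : FreeGroup ℕ → Bool) : Prop :=
  ∀ g, ξ g = true → ∀ u, u <+: g.toWord → ξ (mk u) = true

theorem PrefixClosed.convex {ξ : FreeGroup ℕ → Bool} (h : PrefixClosed ξ) (a b c : FreeGroup ℕ)
    (ha : ξ a = true) (hb : ξ b = true) (habc : fgDist a c + fgDist c b = fgDist a b) :
    ξ c = true := by
  rcases toWord_prefix_of_length_add_length habc with hc | hc
  · simpa [mk_toWord] using h a ha _ hc
  · simpa [mk_toWord] using h b hb _ hc

namespace OmegaTau

variable {A : ℕ → ℕ → Bool} {ξ : FreeGroup ℕ → Bool}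

theorem prefixClosed (hξ : OmegaTau A ξ) : PrefixClosed ξ := by
  rintro g hg u ⟨v, hv⟩
  have hu : IsReduced u := (isReduced_toWord (x := g)).infix ⟨[], v, by simp [hv]⟩
  have hv' : IsReduced v := (isReduced_toWord (x := g)).infix ⟨u, [], by simp [hv]⟩
  have hquot : (mk u)⁻¹ * g = mk v := by
    rw [← mk_toWord (x := g), ← hv, ← mul_mk]
    group
  obtain ⟨hR1, hR2, -, -⟩ := hξ
  refine hR2 1 g _ hR1 hg ?_
  simp only [fgDist, inv_one, one_mul, hquot, toWord_mk_of_isReduced hu,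
    toWord_mk_of_isReduced hv', ← hv, List.length_append]

end OmegaTau

namespace BoundedConfiguration

/-- A filled vertex of a configuration with stem `κ` is either the prefix of length `k` of the
stem, or it is reached through a last letter `m⁻¹`. -/
inductive Site
  | stem (k : ℕ)
  | branch (m : ℕ)

variable (A : ℕ → ℕ → Bool) (κ : List ℕ) (R : Set ℕ)

/-- The letter `y` such that `g y` is filled, for a filled vertex `g` at this site (by (R3) there
is at most one); the end `κ` of the stem has none. -/
def Site.next : Site → Option ℕ
  | .stem k => κ[k]?
  | .branch m => some m

/-- Rule (R4) for a vertex with positive successor `y`, and the root `R` for the end of the stem. -/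
def Admits : Option ℕ → ℕ → Prop
  | some y, x => A x y = true
  | none, x => x ∈ R

open Classical in
noncomputable def step : Site → ℕ × Bool → Option Site
  | .stem k, (a, true) => if κ[k]? = some a then some (.stem (k + 1)) else none
  | .branch _, (_, true) => none
  | s, (a, false) => if Admits A R (s.next κ) a then some (.branch a) else none

/-- Reading a reduced word letter by letter: the site of the vertex, or `none` once it leaves
the configuration. -/
noncomputable def run (w : List (ℕ × Bool)) : Option Site :=
  w.foldlM (step A κ R) (.stem 0)

noncomputable def canonicalConfig (g : FreeGroup ℕ) : Bool :=
  (run A κ R g.toWord).isSome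

variable {A κ R}

theorem run_concat (w : List (ℕ × Bool)) (ℓ : ℕ × Bool) :
    run A κ R (w ++ [ℓ]) = (run A κ R w).bind (step A κ R · ℓ) := by
  simp [run, List.foldlM_append]

theorem run_nil : run A κ R [] = some (.stem 0) := rfl

theorem isSome_run_of_prefix {u w : List (ℕ × Bool)} (h : u <+: w)
    (hw : (run A κ R w).isSome) : (run A κ R u).isSome := by
  obtain ⟨v, rfl⟩ := h
  cases hu : run A κ R u
  · simp only [run, List.foldlM_append] at hw hu
    simp [hu] at hw
  · rfl

theorem step_eq_some_stem {s : Site} {ℓ : ℕ × Bool} {k : ℕ}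
    (h : step A κ R s ℓ = some (.stem k)) :
    ∃ j a, s = .stem j ∧ ℓ = (a, true) ∧ κ[j]? = some a ∧ k = j + 1 := by
  rcases s with j | m <;> rcases ℓ with ⟨a, _ | _⟩ <;> simp [step] at h ⊢
  exact ⟨h.1, h.2.symm⟩

theorem step_eq_some_branch {s : Site} {ℓ : ℕ × Bool} {m : ℕ}
    (h : step A κ R s ℓ = some (.branch m)) : ℓ = (m, false) := by
  rcases s with j | m <;> rcases ℓ with ⟨a, _ | _⟩ <;> simp [step] at h ⊢ <;> exact h.2

theorem isSome_step_false (s : Site) (a : ℕ) :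
    (step A κ R s (a, false)).isSome ↔ Admits A R (s.next κ) a := by
  cases s <;> simp [step]

theorem isSome_step_true {s : Site} {a : ℕ} (hs : s ≠ .branch a) :
    (step A κ R s (a, true)).isSome ↔ s.next κ = some a := by
  cases s with
  | stem k => simp [step, Site.next]
  | branch m =>
    simp only [step, Site.next, Option.isSome_none, Bool.false_eq_true, false_iff, Option.some_inj]
    rintro rfl
    exact hs rfl

theorem run_eq_some_stem {w : List (ℕ × Bool)} {k : ℕ} (h : run A κ R w = some (.stem k)) :
    ∃ l, l <+: κ ∧ l.length = k ∧ w = l.map (·, true) := by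
  induction w using List.reverseRecOn generalizing k with
  | nil =>
    obtain rfl : k = 0 := by simpa [run_nil] using h.symm
    exact ⟨[], List.nil_prefix, rfl, rfl⟩
  | append_singleton w ℓ ih =>
    rw [run_concat] at h
    obtain ⟨s, hs, hstep⟩ := Option.bind_eq_some_iff.1 h
    obtain ⟨j, a, rfl, rfl, ha, rfl⟩ := step_eq_some_stem hstep
    obtain ⟨l, hl, rfl, rfl⟩ := ih hs
    exact ⟨l ++ [a], List.append_singleton_prefix_iff.2 ⟨hl, ha⟩, by simp, by simp⟩

theorem run_eq_some_branch {w : List (ℕ × Bool)} {m : ℕ} (h : run A κ R w = some (.branch m)) :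
    ∃ w', w = w' ++ [(m, false)] := by
  rcases w.eq_nil_or_concat with rfl | ⟨w', ℓ, rfl⟩
  · cases h
  · rw [List.concat_eq_append, run_concat] at h
    obtain ⟨s, -, hstep⟩ := Option.bind_eq_some_iff.1 h
    exact ⟨w', by rw [List.concat_eq_append, step_eq_some_branch hstep]⟩

theorem run_map_true (l : List ℕ) :
    run A κ R (l.map (·, true)) = if l <+: κ then some (.stem l.length) else none := by
  induction l using List.reverseRecOn with
  | nil => simp [run_nil]
  | append_singleton l a ih =>
    rw [List.map_append, List.map_singleton, run_concat, ih]
    by_cases hl : l <+: κ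
    · simp [hl, step, List.append_singleton_prefix_iff]
    · have : ¬ l ++ [a] <+: κ := fun h => hl ((List.prefix_append l [a]).trans h)
      simp [hl, this]

theorem admits_next_of_getElem? (hκ : κ.IsChain (fun a b => A a b = true))
    (hR : ∀ h : κ ≠ [], κ.getLast h ∈ R) {j x : ℕ} (hx : κ[j]? = some x) :
    Admits A R κ[j + 1]? x := by
  obtain ⟨hj, rfl⟩ := List.getElem?_eq_some_iff.1 hx
  rcases hy : κ[j + 1]? with _ | y
  · have hlen : κ.length - 1 = j := by have := List.getElem?_eq_none_iff.1 hy; omega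
    simpa [Admits, List.getLast_eq_getElem, hlen] using hR (List.ne_nil_of_length_pos (by omega))
  · obtain ⟨hj1, rfl⟩ := List.getElem?_eq_some_iff.1 hy
    exact List.isChain_iff_getElem.1 hκ j hj1

theorem canonicalConfig_prefixClosed : PrefixClosed (canonicalConfig A κ R) := by
  intro g hg u hu
  rw [canonicalConfig, toWord_mk_of_isReduced (isReduced_toWord.infix hu.isInfix)]
  exact isSome_run_of_prefix hu hg

theorem canonicalConfig_mul_of_iff {g : FreeGroup ℕ} {s : Site}
    (hs : run A κ R g.toWord = some s) (y : ℕ) :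
    canonicalConfig A κ R (g * of y) = true ↔ s.next κ = some y := by
  by_cases hlast : g.toWord.getLast? = some (y, false)
  · obtain ⟨w, hw⟩ := List.getLast?_eq_some_iff.1 hlast
    obtain rfl : s = .branch y := by
      cases s with
      | stem k =>
        obtain ⟨l, -, -, hl⟩ := run_eq_some_stem hs
        simp [hl, List.getLast?_map] at hlast
      | branch m =>
        obtain ⟨w', hw'⟩ := run_eq_some_branch hs
        simp_all
    rw [of_eq_mk, mul_mk_singleton_of_toWord_eq (b := true) hw]
    exact iff_of_true (canonicalConfig_prefixClosed g (by simp [canonicalConfig, hs]) w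
      ⟨_, hw.symm⟩) rfl
  · rw [canonicalConfig, of_eq_mk, toWord_mul_mk_singleton (b := true) hlast, run_concat, hs,
      Option.bind_some, isSome_step_true]
    rintro rfl
    obtain ⟨w', hw'⟩ := run_eq_some_branch hs
    exact hlast (by simp [hw'])

theorem canonicalConfig_mul_inv_of_iff (hκ : κ.IsChain (fun a b => A a b = true))
    (hR : ∀ h : κ ≠ [], κ.getLast h ∈ R) {g : FreeGroup ℕ} {s : Site}
    (hs : run A κ R g.toWord = some s) (x : ℕ) :
    canonicalConfig A κ R (g * (of x)⁻¹) = true ↔ Admits A R (s.next κ) x := by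
  by_cases hlast : g.toWord.getLast? = some (x, true)
  · obtain ⟨w, hw⟩ := List.getLast?_eq_some_iff.1 hlast
    cases s with
    | branch m =>
      obtain ⟨w', hw'⟩ := run_eq_some_branch hs
      simp [hw'] at hlast
    | stem k =>
      obtain ⟨l, hl, rfl, hgl⟩ := run_eq_some_stem hs
      rcases l.eq_nil_or_concat with rfl | ⟨l, a, rfl⟩
      · simp [hgl] at hlast
      rw [List.concat_eq_append] at hl hgl
      obtain rfl : a = x := by simpa [hgl] using hlast
      refine iff_of_true ?_ ?_
      · rw [inv_of_eq_mk, mul_mk_singleton_of_toWord_eq (b := false) hw]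
        exact canonicalConfig_prefixClosed g (by simp [canonicalConfig, hs]) w ⟨_, hw.symm⟩
      · have hx := (List.append_singleton_prefix_iff.1 hl).2
        simpa [Site.next] using admits_next_of_getElem? hκ hR hx
  · rw [canonicalConfig, inv_of_eq_mk, toWord_mul_mk_singleton (b := false) hlast, run_concat, hs,
      Option.bind_some, isSome_step_false]

theorem canonicalConfig_omegaTau (hκ : κ.IsChain (fun a b => A a b = true))
    (hR : ∀ h : κ ≠ [], κ.getLast h ∈ R) : OmegaTau A (canonicalConfig A κ R) := by
  refine ⟨by simp [canonicalConfig, run_nil], canonicalConfig_prefixClosed.convex, ?_, ?_⟩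
  · intro g hg y z hy hz
    obtain ⟨s, hs⟩ := Option.isSome_iff_exists.1 hg
    rw [canonicalConfig_mul_of_iff hs] at hy hz
    exact Option.some_inj.1 (hy.symm.trans hz)
  · intro g y hg hy x
    obtain ⟨s, hs⟩ := Option.isSome_iff_exists.1 hg
    rw [canonicalConfig_mul_of_iff hs] at hy
    rw [canonicalConfig_mul_inv_of_iff hκ hR hs, hy]
    rfl

theorem canonicalConfig_hasStem : HasStem (canonicalConfig A κ R) κ := by
  intro l
  simp [canonicalConfig, toWord_listToF, run_map_true]

theorem canonicalConfig_root (hκ : κ.IsChain (fun a b => A a b = true))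
    (hR : ∀ h : κ ≠ [], κ.getLast h ∈ R) (x : ℕ) :
    canonicalConfig A κ R (listToF κ * (of x)⁻¹) = true ↔ x ∈ R := by
  have hs : run A κ R (listToF κ).toWord = some (.stem κ.length) := by
    rw [toWord_listToF, run_map_true, if_pos List.prefix_rfl]
  rw [canonicalConfig_mul_inv_of_iff hκ hR hs]
  simp [Site.next, Admits]

end BoundedConfiguration

namespace OmegaTau

open BoundedConfiguration

variable {A : ℕ → ℕ → Bool} {κ : List ℕ} {R : Set ℕ} {η : FreeGroup ℕ → Bool}

theorem mul_of_iff (hη : OmegaTau A η) (hstem : HasStem η κ) {g : FreeGroup ℕ} {s : Site}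
    (hs : run A κ R g.toWord = some s) (hg : η g = true) (y : ℕ) :
    η (g * of y) = true ↔ s.next κ = some y := by
  cases s with
  | stem k =>
    obtain ⟨l, hl, rfl, hgl⟩ := run_eq_some_stem hs
    rw [← mk_toWord (x := g), hgl, ← listToF_eq_mk, ← listToF_concat, hstem,
      List.append_singleton_prefix_iff]
    simp [Site.next, hl]
  | branch m =>
    obtain ⟨w, hw⟩ := run_eq_some_branch hs
    have hm : η (g * of m) = true := by
      rw [of_eq_mk, mul_mk_singleton_of_toWord_eq (b := true) hw]
      exact hη.prefixClosed g hg w ⟨_, hw.symm⟩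
    simp only [Site.next, Option.some_inj]
    obtain ⟨-, -, hR3, -⟩ := hη
    exact ⟨fun hy => (hR3 g hg y m hy hm).symm, fun h => h ▸ hm⟩

theorem mul_inv_of_iff (hη : OmegaTau A η) (hstem : HasStem η κ)
    (hroot : ∀ x : ℕ, η (listToF κ * (of x)⁻¹) = true ↔ x ∈ R) {g : FreeGroup ℕ} {s : Site}
    (hs : run A κ R g.toWord = some s) (hg : η g = true) (x : ℕ) :
    η (g * (of x)⁻¹) = true ↔ Admits A R (s.next κ) x := by
  rcases hnext : s.next κ with _ | y
  · obtain ⟨k, rfl⟩ : ∃ k, s = .stem k := by cases s <;> simp_all [Site.next]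
    obtain ⟨l, hl, rfl, hgl⟩ := run_eq_some_stem hs
    obtain rfl : l = κ :=
      hl.eq_of_length (le_antisymm hl.length_le (List.getElem?_eq_none_iff.1 hnext))
    rw [← mk_toWord (x := g), hgl, ← listToF_eq_mk]
    exact hroot x
  · have hy := (hη.mul_of_iff hstem hs hg y).2 hnext
    obtain ⟨-, -, -, hR4⟩ := hη
    exact hR4 g y hg hy x

theorem eq_canonicalConfig (hη : OmegaTau A η) (hstem : HasStem η κ)
    (hroot : ∀ x : ℕ, η (listToF κ * (of x)⁻¹) = true ↔ x ∈ R) :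
    η = canonicalConfig A κ R := by
  suffices h : ∀ w, IsReduced w → η (mk w) = (run A κ R w).isSome by
    funext g
    simpa [mk_toWord, canonicalConfig] using h g.toWord isReduced_toWord
  intro w hw
  induction w using List.reverseRecOn with
  | nil => exact hη.1
  | append_singleton w ℓ ih =>
    have hw' : IsReduced w := hw.infix ⟨[], [ℓ], by simp⟩
    have hs' := ih hw'
    rw [run_concat, ← mul_mk]
    cases hs : run A κ R w with
    | none =>
      simp only [hs, Option.isSome_none, Option.bind_none] at hs' ⊢
      refine Bool.eq_false_iff.2 fun h => ?_
      have := hη.prefixClosed _ h w ⟨[ℓ], by rw [mul_mk, toWord_mk_of_isReduced hw]⟩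
      simp [hs'] at this
    | some s =>
      have hηw : η (mk w) = true := by simpa [hs] using hs'
      have hsw : run A κ R (mk w).toWord = some s := by rwa [toWord_mk_of_isReduced hw']
      rw [Option.bind_some, Bool.eq_iff_iff]
      obtain ⟨a, _ | _⟩ := ℓ
      · rw [← inv_of_eq_mk, hη.mul_inv_of_iff hstem hroot hsw hηw, isSome_step_false]
      · rw [← of_eq_mk, hη.mul_of_iff hstem hsw hηw, isSome_step_true]
        rintro rfl
        obtain ⟨w', rfl⟩ := run_eq_some_branch hs
        simpa using (hw.infix ⟨w', [], by simp⟩ : IsReduced [(a, false), (a, true)])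

end OmegaTau

open BoundedConfiguration

/-- A bounded configuration of `Ω_A^τ` is uniquely determined by its stem `κ` and the
root `R_ξ(κ) = {x : ξ_{κ x⁻¹} = 1}` of its stem; conversely, every pair `(κ, R)` with
`κ` a finite positive admissible word and `R ⊆ ℕ` containing the last letter of `κ`
(when `κ ≠ e`) arises from exactly one configuration in `Ω_A^τ`. -/
theorem boundedConfiguration_determined_by_stem_and_root
    (A : ℕ → ℕ → Bool) (κ : List ℕ) (hκ : κ.Chain' (fun a b => A a b = true)) :
    (∀ ξ η : FreeGroup ℕ → Bool, OmegaTau A ξ → OmegaTau A η →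
      HasStem ξ κ → HasStem η κ →
      (∀ x : ℕ, ξ (listToF κ * (FreeGroup.of x)⁻¹) = η (listToF κ * (FreeGroup.of x)⁻¹)) →
      ξ = η) ∧
    (∀ R : Set ℕ, (∀ h : κ ≠ [], κ.getLast h ∈ R) →
      ∃! ξ : FreeGroup ℕ → Bool, OmegaTau A ξ ∧ HasStem ξ κ ∧
        ∀ x : ℕ, (ξ (listToF κ * (FreeGroup.of x)⁻¹) = true ↔ x ∈ R)) := by
  refine ⟨fun ξ η hξ hη hξκ hηκ hroot => ?_, fun R hR => ?_⟩
  · let R : Set ℕ := {x | ξ (listToF κ * (of x)⁻¹) = true}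
    rw [hξ.eq_canonicalConfig hξκ (R := R) fun _ => Iff.rfl,
      hη.eq_canonicalConfig hηκ (R := R) fun x => by rw [← hroot]; rfl]
  · refine ⟨canonicalConfig A κ R,
      ⟨canonicalConfig_omegaTau hκ hR, canonicalConfig_hasStem, canonicalConfig_root hκ hR⟩, ?_⟩
    rintro η ⟨hη, hηκ, hηR⟩
    exact hη.eq_canonicalConfig hηκ hηR
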